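/- arXiv:2509.19811 — 2 statements merged into one kernel-verified Lean document; each statement's English description precedes it below -/
import Mathlib

section
/- Consider the scalar impulse system y(t) = e^{-λ₁ t}·y₀ + e^{-λ₁(t−τ₁)}·u₁·𝟙_{t ≥ τ₁} + e^{-λ₁(t−τ₂)}·u₂·𝟙_{t ≥ τ₂} with y₀ = 1, λ₁ > 0, r = 1/6, τ₁ = (1/λ₁)·log 2, τ₂ = (1/λ₁)·log 4. Then the minimal norm needed so that |y(τ₂)| ≤ r using both impulses u₁, u₂ with max(|u₁|,|u₂|) ≤ N is N*(τ₂) = 1/18, while the minimal norm needed so that |y(τ₂⁻)| = |(1/2)u₁ + 1/4| ≤ 1/6 using only u₁ is 1/6; in particular lim_{t→τ₂⁻} N*(t) = 1/6 > N*(τ₂) = 1/18. -/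
theorem stmt_7
    (lam : ℝ) (hlam : 0 < lam)
    (τ₁ τ₂ : ℝ) (hτ₁ : τ₁ = (1 / lam) * Real.log 2) (hτ₂ : τ₂ = (1 / lam) * Real.log 4) :
    Real.exp (-lam * (τ₂ - τ₁)) = 1 / 2 ∧
    Real.exp (-lam * τ₂) = 1 / 4 ∧
    sInf {N : ℝ | ∃ u₁ u₂ : ℝ, max |u₁| |u₂| ≤ N ∧ |u₂ + (1 / 2) * u₁ + 1 / 4| ≤ 1 / 6}
      = 1 / 18 ∧
    sInf {N : ℝ | ∃ u₁ : ℝ, |u₁| ≤ N ∧ |(1 / 2) * u₁ + 1 / 4| ≤ 1 / 6} = 1 / 6 ∧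
    (1 / 18 : ℝ) < 1 / 6 := by
  refine ⟨?_, ?_, ?_, ?_, by norm_num⟩
  · have : -lam * (τ₂ - τ₁) = Real.log (1/2) := by
      rw [hτ₁, hτ₂]
      have h42 : Real.log 4 = Real.log 2 + Real.log 2 := by
        rw [← Real.log_mul (by norm_num) (by norm_num)]; norm_num
      rw [Real.log_div (by norm_num) (by norm_num), Real.log_one, h42]
      field_simp
      ring
    rw [this, Real.exp_log (by norm_num)]
  · have : -lam * τ₂ = Real.log (1/4) := by
      rw [hτ₂, Real.log_div (by norm_num) (by norm_num), Real.log_one]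
      field_simp
      ring
    rw [this, Real.exp_log (by norm_num)]
  · apply le_antisymm
    · refine csInf_le ?_ ?_
      · refine ⟨0, ?_⟩
        rintro N ⟨u₁, u₂, h1, h2⟩
        exact le_trans (le_trans (abs_nonneg _) (le_max_left _ _)) h1
      · exact Set.mem_setOf.mpr ⟨-1/18, -1/18, by norm_num [abs_le], by rw [abs_le]; constructor <;> norm_num⟩
    · refine le_csInf ⟨1/18, ?_⟩ ?_
      · exact ⟨-1/18, -1/18, by norm_num [abs_le], by rw [abs_le]; constructor <;> norm_num⟩
      rintro N ⟨u₁, u₂, h1, h2⟩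
      have hu1 : |u₁| ≤ N := le_trans (le_max_left _ _) h1
      have hu2 : |u₂| ≤ N := le_trans (le_max_right _ _) h1
      rw [abs_le] at hu1 hu2 h2
      linarith [hu1.1, hu2.1, h2.2, h2.1]
  · apply le_antisymm
    · refine csInf_le ?_ ?_
      · refine ⟨0, ?_⟩
        rintro N ⟨u₁, h1, h2⟩
        exact le_trans (abs_nonneg _) h1
      · exact Set.mem_setOf.mpr ⟨-1/6, by norm_num [abs_le], by rw [abs_le]; constructor <;> norm_num⟩
    · refine le_csInf ⟨1/6, ?_⟩ ?_
      · exact ⟨-1/6, by norm_num [abs_le], by rw [abs_le]; constructor <;> norm_num⟩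
      rintro N ⟨u₁, h1, h2⟩
      rw [abs_le] at h1 h2
      linarith [h1.1, h2.1, h2.2]
end

section
/- Let S(t) be a contraction semigroup on Hilbert space H with ‖S(t)‖ ≤ e^{−λ₁ t}, λ₁ > 0. Fix τ₁ < T₁ < T₂, controls acting at times τ_j ≤ T₁ via y(T) = S(T)y₀ + Σ_{j=1}^{k₁} S(T−τ_j)χ_j u_j. If ‖y(T₁; u¹)‖ ≤ r with max_j‖u¹_j‖ = N₁ > 0, then for u² = (1−ε)u¹ with ε = min(1, (1 − e^{−λ₁(T₂−T₁)})r / (e^{−λ₁(T₂−T₁)} k₁ N₁)) ∈ (0,1], one has ‖y(T₂; u²)‖ ≤ r and max_j‖u²_j‖ < N₁. -/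
theorem stmt_18
    {H : Type*} [NormedAddCommGroup H] [InnerProductSpace ℝ H]
    (S : ℝ → H →L[ℝ] H) (lam : ℝ) (hlam : 0 < lam)
    (hsemi : ∀ s t : ℝ, 0 ≤ s → 0 ≤ t → S (s + t) = (S s).comp (S t))
    (hdecay : ∀ t : ℝ, 0 ≤ t → ∀ y : H, ‖S t y‖ ≤ Real.exp (-lam * t) * ‖y‖)
    (k₁ : ℕ) (τ : Fin (k₁ + 1) → ℝ) (χ : Fin (k₁ + 1) → H →L[ℝ] H)
    (hχ : ∀ j, ∀ y : H, ‖χ j y‖ ≤ ‖y‖)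
    (T₁ T₂ r N₁ : ℝ) (hr : 0 < r) (hN₁ : 0 < N₁)
    (hτ : ∀ j, 0 ≤ τ j ∧ τ j ≤ T₁) (hT : T₁ < T₂)
    (y₀ : H) (u1 : Fin (k₁ + 1) → H) (hu1 : ∀ j, ‖u1 j‖ ≤ N₁)
    (hadm : ‖S T₁ y₀ + ∑ j, S (T₁ - τ j) (χ j (u1 j))‖ ≤ r)
    (ε : ℝ)
    (hε : ε = min 1 ((1 - Real.exp (-lam * (T₂ - T₁))) * r /
      (Real.exp (-lam * (T₂ - T₁)) * (k₁ + 1) * N₁))) :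
    0 < ε ∧ ε ≤ 1 ∧
    ‖S T₂ y₀ + ∑ j, S (T₂ - τ j) (χ j ((1 - ε) • u1 j))‖ ≤ r ∧
    ∀ j, ‖(1 - ε) • u1 j‖ < N₁ := by
  set δ := T₂ - T₁ with hδ
  set E := Real.exp (-lam * δ) with hE
  have hδpos : 0 < δ := by simp [hδ]; linarith
  have hEpos : 0 < E := Real.exp_pos _
  have hElt1 : E < 1 := by
    rw [hE]
    apply Real.exp_lt_one_iff.mpr
    nlinarith
  have hk : (0:ℝ) < (k₁:ℝ) + 1 := by positivity
  have hDpos : 0 < E * ((k₁:ℝ) + 1) * N₁ := by positivity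
  have hεpos : 0 < ε := by
    rw [hε]
    apply lt_min one_pos
    apply div_pos _ hDpos
    nlinarith
  have hεle1 : ε ≤ 1 := by rw [hε]; exact min_le_left _ _
  have hεD : ε * (E * ((k₁:ℝ) + 1) * N₁) ≤ (1 - E) * r := by
    have h2 : ε ≤ (1 - E) * r / (E * ((k₁:ℝ) + 1) * N₁) := by
      rw [hε]; exact min_le_right _ _
    calc ε * (E * ((k₁:ℝ) + 1) * N₁)
        ≤ ((1 - E) * r / (E * ((k₁:ℝ) + 1) * N₁)) * (E * ((k₁:ℝ) + 1) * N₁) := by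
          exact mul_le_mul_of_nonneg_right h2 hDpos.le
      _ = (1 - E) * r := by field_simp
  have hT₁ : 0 ≤ T₁ := le_trans (hτ 0).1 (hτ 0).2
  -- rewrite the state at time T₂
  have hSy₀ : S T₂ y₀ = S δ (S T₁ y₀) := by
    have := hsemi δ T₁ hδpos.le hT₁
    rw [show δ + T₁ = T₂ by ring] at this
    rw [this]; rfl
  have hSτ : ∀ j, S (T₂ - τ j) = (S δ).comp (S (T₁ - τ j)) := by
    intro j
    have h1 : 0 ≤ T₁ - τ j := by linarith [(hτ j).2]
    have := hsemi δ (T₁ - τ j) hδpos.le h1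
    rw [show δ + (T₁ - τ j) = T₂ - τ j by ring] at this
    exact this
  set A : Fin (k₁ + 1) → H := fun j => S (T₁ - τ j) (χ j (u1 j)) with hA
  have hAnorm : ∀ j, ‖A j‖ ≤ N₁ := by
    intro j
    have h1 : 0 ≤ T₁ - τ j := by linarith [(hτ j).2]
    calc ‖A j‖ ≤ Real.exp (-lam * (T₁ - τ j)) * ‖χ j (u1 j)‖ :=
          hdecay _ h1 _
      _ ≤ 1 * N₁ := by
          apply mul_le_mul _ (le_trans (hχ j (u1 j)) (hu1 j)) (norm_nonneg _) zero_le_one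
          apply Real.exp_le_one_iff.mpr
          nlinarith
      _ = N₁ := one_mul _
  have key : S T₂ y₀ + ∑ j, S (T₂ - τ j) (χ j ((1 - ε) • u1 j)) =
      S δ ((S T₁ y₀ + ∑ j, A j) - ε • ∑ j, A j) := by
    have h1 : (S T₁ y₀ + ∑ j, A j) - ε • ∑ j, A j
        = S T₁ y₀ + (1 - ε) • ∑ j, A j := by
      rw [sub_smul, one_smul]; abel
    rw [h1, map_add, map_smul, map_sum, hSy₀]
    congr 1
    rw [Finset.smul_sum]
    apply Finset.sum_congr rfl
    intro j _
    rw [hSτ j, map_smul]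
    simp [hA]
  constructor
  · exact hεpos
  constructor
  · exact hεle1
  constructor
  · rw [key]
    have hsum : ‖∑ j, A j‖ ≤ ((k₁:ℝ) + 1) * N₁ := by
      calc ‖∑ j, A j‖ ≤ ∑ j, ‖A j‖ := norm_sum_le _ _
        _ ≤ ∑ _j : Fin (k₁+1), N₁ := Finset.sum_le_sum (fun j _ => hAnorm j)
        _ = ((k₁:ℝ) + 1) * N₁ := by
            simp [Finset.sum_const, Finset.card_univ]
    calc ‖S δ ((S T₁ y₀ + ∑ j, A j) - ε • ∑ j, A j)‖
        ≤ E * ‖(S T₁ y₀ + ∑ j, A j) - ε • ∑ j, A j‖ := hdecay _ hδpos.le _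
      _ ≤ E * (‖S T₁ y₀ + ∑ j, A j‖ + ‖ε • ∑ j, A j‖) := by
          apply mul_le_mul_of_nonneg_left (norm_sub_le _ _) hEpos.le
      _ ≤ E * (r + ε * (((k₁:ℝ) + 1) * N₁)) := by
          apply mul_le_mul_of_nonneg_left _ hEpos.le
          apply add_le_add hadm
          rw [norm_smul, Real.norm_eq_abs, abs_of_pos hεpos]
          exact mul_le_mul_of_nonneg_left hsum hεpos.le
      _ = E * r + ε * (E * ((k₁:ℝ) + 1) * N₁) := by ring
      _ ≤ E * r + (1 - E) * r := by linarith
      _ = r := by ring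
  · intro j
    rw [norm_smul, Real.norm_eq_abs, abs_of_nonneg (by linarith : (0:ℝ) ≤ 1 - ε)]
    calc (1 - ε) * ‖u1 j‖ ≤ (1 - ε) * N₁ :=
          mul_le_mul_of_nonneg_left (hu1 j) (by linarith)
      _ < N₁ := by nlinarith
end
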